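/- arXiv:2412.16546 — 3 statements merged into one kernel-verified Lean document; each statement's English description precedes it below -/
import Mathlib

section
/- Let κ be an infinite cardinal and B a complete Boolean algebra. The Stone space St(B) is not a κ-meager subset of itself if and only if the forcing axiom FA_κ(B) holds. -/
open Classical

/-- An ultrafilter on a Boolean algebra `B`, viewed as a subset of `B`:
upward closed, closed under meets, omitting `⊥`, and containing exactly one of
`b`, `bᶜ` for every `b`. -/
def IsUltra {B : Type*} [BooleanAlgebra B] (G : Set B) : Prop :=
  (∀ a b : B, a ∈ G → a ≤ b → b ∈ G) ∧
  (∀ a b : B, a ∈ G → b ∈ G → a ⊓ b ∈ G) ∧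
  (⊥ : B) ∉ G ∧
  ∀ b : B, (b ∈ G ∨ bᶜ ∈ G) ∧ ¬(b ∈ G ∧ bᶜ ∈ G)

/-- The Stone space of a Boolean algebra: the set of its ultrafilters. -/
def StoneSp (B : Type*) [BooleanAlgebra B] : Type _ :=
  {G : Set B // IsUltra G}

/-- The basic (cl)open set `O_b` of the Stone space. -/
def basicOpen {B : Type*} [BooleanAlgebra B] (b : B) : Set (StoneSp B) :=
  {G : StoneSp B | b ∈ G.1}

/-- The Stone topology, generated by the sets `O_b`. -/
instance {B : Type*} [BooleanAlgebra B] : TopologicalSpace (StoneSp B) :=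
  TopologicalSpace.generateFrom {S : Set (StoneSp B) | ∃ b : B, S = basicOpen b}

/-- A set is `κ`-meager if it is a union of `κ`-many nowhere dense sets. -/
def KMeager (κ : Type*) {X : Type*} [TopologicalSpace X] (A : Set X) : Prop :=
  ∃ F : κ → Set X, (∀ i, IsNowhereDense (F i)) ∧ A = ⋃ i, F i

/-- A set has the `κ`-Baire property if it differs from an open set by a
`κ`-meager set. -/
def KBaireProperty (κ : Type*) {X : Type*} [TopologicalSpace X] (A : Set X) : Prop :=
  ∃ U : Set X, IsOpen U ∧ KMeager κ (symmDiff A U)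

/-- `D` is a dense subset of the poset `P`. -/
def DenseIn {P : Type*} [Preorder P] (D : Set P) : Prop :=
  ∀ p : P, ∃ d ∈ D, d ≤ p

/-- The forcing axiom `FA_κ(P)`: every κ-indexed family of dense subsets of `P`
admits a filter meeting all of them. -/
def ForcingAxiom (κ P : Type*) [Preorder P] : Prop :=
  ∀ D : κ → Set P, (∀ i, DenseIn (D i)) →
    ∃ g : Order.PFilter P, ∀ i, ∃ p ∈ g, p ∈ D i

/-!
A nonzero `b` gives the nonempty clopen set `O_b`. Hence a dense `D ⊆ B ∖ {0}` yields the open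
dense set `⋃_{d ∈ D} O_d`, and a nowhere dense `F` yields the dense set of those `d` with
`O_d ∩ F = ∅`. An ultrafilter lies in `⋃_{d ∈ D} O_d` iff it meets `D`, and every filter on
`B ∖ {0}` extends to an ultrafilter, so filters meeting κ dense sets correspond to points
outside κ nowhere dense sets.
-/

namespace StoneSp

variable {B : Type*} [BooleanAlgebra B]

theorem mem_of_le (G : StoneSp B) {a b : B} (ha : a ∈ G.1) (hab : a ≤ b) : b ∈ G.1 :=
  G.2.1 a b ha hab

theorem inf_mem (G : StoneSp B) {a b : B} (ha : a ∈ G.1) (hb : b ∈ G.1) : a ⊓ b ∈ G.1 :=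
  G.2.2.1 a b ha hb

theorem ne_bot_of_mem (G : StoneSp B) {a : B} (ha : a ∈ G.1) : a ≠ ⊥ :=
  fun h => G.2.2.2.1 (h ▸ ha)

theorem top_mem (G : StoneSp B) : (⊤ : B) ∈ G.1 := by
  simpa using (G.2.2.2.2 ⊥).1.resolve_left G.2.2.2.1

-- A maximal ideal of `Bᵒᵈ` is prime, so it contains `b` or `bᶜ`.
theorem exists_superset_of_bot_notMem (F : Order.PFilter B) (hF : ⊥ ∉ F) :
    ∃ G : StoneSp B, (F : Set B) ⊆ G.1 := by
  have hproper : F.dual.IsProper := Order.Ideal.isProper_iff_top_notMem.2 hF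
  obtain ⟨J, hFJ, hJ⟩ := hproper.exists_le_maximal
  exact ⟨⟨{b | OrderDual.toDual b ∈ J}, fun a b ha hab => J.lower hab ha,
    fun a b ha hb => J.sup_mem ha hb, hJ.top_notMem,
    fun b => ⟨hJ.isPrime.mem_or_compl_mem, fun h => hJ.notMem_of_compl_mem h.2 h.1⟩⟩,
    fun b hb => hFJ hb⟩

def toPFilter (G : StoneSp B) : Order.PFilter {b : B // b ≠ ⊥} :=
  Order.IsPFilter.toPFilter (F := {p | p.1 ∈ G.1}) <| .of_def
    ⟨⟨⊤, G.ne_bot_of_mem G.top_mem⟩, G.top_mem⟩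
    (fun p hp q hq => ⟨⟨p.1 ⊓ q.1, G.ne_bot_of_mem (G.inf_mem hp hq)⟩, G.inf_mem hp hq,
      inf_le_left, inf_le_right⟩)
    (fun hpq hp => G.mem_of_le hp hpq)

theorem exists_extends_pfilter (g : Order.PFilter {b : B // b ≠ ⊥}) :
    ∃ G : StoneSp B, ∀ p ∈ g, p.1 ∈ G.1 := by
  let F : Set B := {a | ∃ p ∈ g, p.1 ≤ a}
  have hF : Order.IsPFilter F := .of_def
    (g.nonempty.elim fun p hp => ⟨p.1, p, hp, le_rfl⟩)
    (by
      rintro a ⟨p, hp, hpa⟩ b ⟨q, hq, hqb⟩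
      obtain ⟨r, hr, hrp, hrq⟩ := g.directed p hp q hq
      exact ⟨r.1, ⟨r, hr, le_rfl⟩, le_trans hrp hpa, le_trans hrq hqb⟩)
    (fun hab ⟨p, hp, hpa⟩ => ⟨p, hp, hpa.trans hab⟩)
  obtain ⟨G, hG⟩ :=
    exists_superset_of_bot_notMem hF.toPFilter fun ⟨p, _, hp⟩ => p.2 (le_bot_iff.1 hp)
  exact ⟨G, fun p hp => hG ⟨p, hp, le_rfl⟩⟩

end StoneSp

section StoneTopology

variable {B : Type*} [BooleanAlgebra B]

theorem basicOpen_inf (a b : B) : basicOpen (a ⊓ b) = basicOpen a ∩ basicOpen b :=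
  Set.ext fun G => ⟨fun h => ⟨G.mem_of_le h inf_le_left, G.mem_of_le h inf_le_right⟩,
    fun h => G.inf_mem h.1 h.2⟩

theorem basicOpen_mono : Monotone (basicOpen : B → Set (StoneSp B)) :=
  fun _ _ hab G hG => G.mem_of_le hG hab

theorem basicOpen_nonempty_iff {b : B} : (basicOpen b).Nonempty ↔ b ≠ ⊥ := by
  refine ⟨fun ⟨G, hG⟩ => G.ne_bot_of_mem hG, fun hb => ?_⟩
  obtain ⟨G, hG⟩ := StoneSp.exists_superset_of_bot_notMem (.principal b) (mt le_bot_iff.1 hb)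
  exact ⟨G, hG le_rfl⟩

theorem isTopologicalBasis_basicOpen :
    TopologicalSpace.IsTopologicalBasis {S : Set (StoneSp B) | ∃ b : B, S = basicOpen b} := by
  refine ⟨?_, Set.eq_univ_of_forall fun G => ⟨_, ⟨⊤, rfl⟩, G.top_mem⟩, rfl⟩
  rintro _ ⟨a, rfl⟩ _ ⟨b, rfl⟩ G hG
  exact ⟨_, ⟨a ⊓ b, rfl⟩, (basicOpen_inf a b).symm ▸ hG, (basicOpen_inf a b).le⟩

theorem isOpen_basicOpen (b : B) : IsOpen (basicOpen b) :=
  isTopologicalBasis_basicOpen.isOpen ⟨b, rfl⟩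

theorem dense_biUnion_basicOpen {D : Set {b : B // b ≠ ⊥}} (hD : DenseIn D) :
    Dense (⋃ d ∈ D, basicOpen d.1) := by
  refine isTopologicalBasis_basicOpen.dense_iff.2 ?_
  rintro _ ⟨b, rfl⟩ hb
  obtain ⟨d, hdD, hdb⟩ := hD ⟨b, basicOpen_nonempty_iff.1 hb⟩
  obtain ⟨G, hG⟩ := basicOpen_nonempty_iff.2 d.2
  exact ⟨G, basicOpen_mono hdb hG, Set.mem_biUnion hdD hG⟩

theorem isNowhereDense_compl_biUnion_basicOpen {D : Set {b : B // b ≠ ⊥}} (hD : DenseIn D) :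
    IsNowhereDense (⋃ d ∈ D, basicOpen d.1)ᶜ :=
  (isClosed_isNowhereDense_iff_compl.2 <| by
    rw [compl_compl]
    exact ⟨isOpen_biUnion fun d _ => isOpen_basicOpen d.1, dense_biUnion_basicOpen hD⟩).2

theorem denseIn_disjoint_basicOpen {F : Set (StoneSp B)} (hF : IsNowhereDense F) :
    DenseIn {d : {b : B // b ≠ ⊥} | Disjoint (basicOpen d.1) F} := by
  intro p
  obtain ⟨hopen, hdense⟩ :=
    isClosed_isNowhereDense_iff_compl.1 ⟨isClosed_closure, hF.closure⟩
  obtain ⟨G, hGp, hGF⟩ :=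
    hdense.inter_open_nonempty _ (isOpen_basicOpen p.1) (basicOpen_nonempty_iff.2 p.2)
  obtain ⟨_, ⟨c, rfl⟩, hGc, hc⟩ := isTopologicalBasis_basicOpen.isOpen_iff.1 hopen G hGF
  refine ⟨⟨c ⊓ p.1, G.ne_bot_of_mem (G.inf_mem hGc hGp)⟩, ?_, inf_le_right⟩
  exact Set.disjoint_left.2 fun H hH hHF =>
    hc (basicOpen_mono inf_le_left hH) (subset_closure hHF)

end StoneTopology

section

variable {κ B : Type*} [BooleanAlgebra B]

theorem forcingAxiom_of_not_kMeager_univ (h : ¬ KMeager κ (Set.univ : Set (StoneSp B))) :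
    ForcingAxiom κ {b : B // b ≠ ⊥} := by
  intro D hD
  by_contra hno
  refine h ⟨fun i => (⋃ d ∈ D i, basicOpen d.1)ᶜ,
    fun i => isNowhereDense_compl_biUnion_basicOpen (hD i), ?_⟩
  refine (Set.eq_univ_of_forall fun G => ?_).symm
  by_contra hG
  have hmeets : ∀ i, ∃ d ∈ D i, d.1 ∈ G.1 := by simpa [basicOpen] using hG
  exact hno ⟨G.toPFilter, fun i => (hmeets i).imp fun _ hd => ⟨hd.2, hd.1⟩⟩

theorem not_kMeager_univ_of_forcingAxiom (fa : ForcingAxiom κ {b : B // b ≠ ⊥}) :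
    ¬ KMeager κ (Set.univ : Set (StoneSp B)) := by
  rintro ⟨F, hF, huniv⟩
  obtain ⟨g, hg⟩ := fa _ fun i => denseIn_disjoint_basicOpen (hF i)
  obtain ⟨G, hG⟩ := StoneSp.exists_extends_pfilter g
  obtain ⟨i, hGi⟩ := Set.mem_iUnion.1 (huniv ▸ Set.mem_univ G)
  obtain ⟨p, hpg, hpF⟩ := hg i
  exact Set.disjoint_left.1 hpF (hG p hpg) hGi

end

theorem statement5_general {κ B : Type*} [CompleteBooleanAlgebra B] :
    ¬ KMeager κ (Set.univ : Set (StoneSp B)) ↔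
      ForcingAxiom κ {b : B // b ≠ ⊥} :=
  ⟨forcingAxiom_of_not_kMeager_univ, not_kMeager_univ_of_forcingAxiom⟩

/-- `St(B)` is not κ-meager in itself iff `FA_κ(B)` holds
(where `FA_κ(B)` is the forcing axiom for the poset `B \ {0}`). -/
theorem statement5 {κ B : Type*} [Infinite κ] [CompleteBooleanAlgebra B] :
    ¬ KMeager κ (Set.univ : Set (StoneSp B)) ↔
      ForcingAxiom κ {b : B // b ≠ ⊥} :=
  statement5_general
end

section
/- Let κ be an infinite cardinal, P a poset satisfying the forcing axiom FA_κ(P), Y a set, and T a tree^κ on Y. Suppose that for each α < κ there are a dense subset D_α of P and a function v_α : D_α → Y such that: (i) whenever p, q ∈ D_α are compatible in P (i.e., have a common lower bound), then v_α(p) = v_α(q); and (ii) for every finite set F ⊆ κ and every family (p_α)_{α ∈ F} with p_α ∈ D_α admitting a common lower bound in P, the finite partial function with domain F sending α to v_α(p_α) belongs to T. Then [T] is nonempty; indeed, any filter g on P meeting every D_α determines an element x ∈ [T] by x(α) = v_α(p) for any p ∈ g ∩ D_α. -/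
open Classical

/-- `FnLe p q` : the finite partial function `p` (given by its domain together
with a total function recording its values) is a restriction of `q`. -/
def FnLe {κ Y : Type*} (p q : Finset κ × (κ → Y)) : Prop :=
  p.1 ⊆ q.1 ∧ ∀ i ∈ p.1, p.2 i = q.2 i

/-- A `tree^κ` on `Y`: a set of finite partial functions from `κ` to `Y`
closed under restriction. -/
def IsTreeK {κ Y : Type*} (T : Set (Finset κ × (κ → Y))) : Prop :=
  ∀ q ∈ T, ∀ p, FnLe p q → p ∈ T

/-- The body `[T]` of a `tree^κ`: all `x : κ → Y` all of whose finite
restrictions lie in `T`. -/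
def branches {κ Y : Type*} (T : Set (Finset κ × (κ → Y))) : Set (κ → Y) :=
  {x | ∀ u : Finset κ, (u, x) ∈ T}

/-- The projection `p[T]` of the body of a `tree^κ` on `Y × W` to `Y^κ`. -/
def projBody {κ Y W : Type*} (T : Set (Finset κ × (κ → Y × W))) : Set (κ → Y) :=
  {x | ∃ w : κ → W, (fun i => (x i, w i)) ∈ branches T}

private lemma filter_finset_lb {κ P : Type*} [Preorder P] (g : Order.PFilter P)
    (u : Finset κ) (p : κ → P) (hp : ∀ i ∈ u, p i ∈ g) :
    ∃ r ∈ g, ∀ i ∈ u, r ≤ p i := by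
  classical
  induction u using Finset.induction_on with
  | empty =>
      obtain ⟨r, hr⟩ := g.nonempty
      exact ⟨r, hr, by simp⟩
  | @insert a s ha ih =>
      obtain ⟨r, hrg, hr⟩ := ih (fun i hi => hp i (Finset.mem_insert_of_mem hi))
      have hpa : p a ∈ g := hp a (Finset.mem_insert_self a s)
      obtain ⟨t, htg, ht1, ht2⟩ := g.directed _ hpa _ hrg
      refine ⟨t, htg, fun i hi => ?_⟩
      rcases Finset.mem_insert.1 hi with rfl | hi
      · exact ht1
      · exact le_trans ht2 (hr i hi)

/-- under `FA_κ(P)`, given dense sets `D_α ⊆ P` and value maps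
`v_α` (constant on compatible conditions, and producing elements of `T` on
finite families with a common lower bound), the body `[T]` is nonempty; indeed
any filter meeting every `D_α` determines an element of `[T]` via the `v_α`. -/
theorem statement10 {κ P Y : Type*} [Infinite κ] [Preorder P]
    (hFA : ForcingAxiom κ P)
    (T : Set (Finset κ × (κ → Y))) (hT : IsTreeK T)
    (D : κ → Set P) (hD : ∀ i : κ, DenseIn (D i))
    (v : κ → P → Y)
    (hcomp : ∀ i : κ, ∀ p ∈ D i, ∀ q ∈ D i,
      (∃ r : P, r ≤ p ∧ r ≤ q) → v i p = v i q)
    (htree : ∀ F : Finset κ, ∀ p : κ → P, (∀ i ∈ F, p i ∈ D i) →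
      (∃ r : P, ∀ i ∈ F, r ≤ p i) → (F, fun i => v i (p i)) ∈ T) :
    (branches T).Nonempty ∧
      ∀ g : Order.PFilter P, (∀ i : κ, ∃ p ∈ g, p ∈ D i) →
        ∃ x ∈ branches T, ∀ i : κ, ∀ p ∈ g, p ∈ D i → x i = v i p := by
  classical
  have key : ∀ g : Order.PFilter P, (∀ i : κ, ∃ p ∈ g, p ∈ D i) →
      ∃ x ∈ branches T, ∀ i : κ, ∀ p ∈ g, p ∈ D i → x i = v i p := by
    intro g hg
    choose q hqg hqD using hg
    set x : κ → Y := fun i => v i (q i) with hx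
    have hval : ∀ i : κ, ∀ p ∈ g, p ∈ D i → x i = v i p := by
      intro i p hpg hpD
      obtain ⟨r, _, hr1, hr2⟩ := g.directed _ (hqg i) _ hpg
      exact hcomp i (q i) (hqD i) p hpD ⟨r, hr1, hr2⟩
    have hbr : x ∈ branches T := by
      intro u
      obtain ⟨r, hrg, hr⟩ := filter_finset_lb g u q (fun i _ => hqg i)
      have hmem := htree u q (fun i _ => hqD i) ⟨r, hr⟩
      exact hT _ hmem (u, x) ⟨subset_rfl, fun i _ => rfl⟩
    exact ⟨x, hbr, hval⟩
  obtain ⟨g, hg⟩ := hFA D hD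
  obtain ⟨x, hx, -⟩ := key g hg
  exact ⟨⟨x, hx⟩, key⟩
end

section
/- Let κ be an infinite cardinal, B a complete Boolean algebra, and S a subset of the Stone space St(B) which has the κ-Baire property in St(B). Then the set D = {b ∈ B ∖ {0} : O_b ∖ S is κ-meager in St(B), or O_b ∩ S is κ-meager in St(B)} is dense in B ∖ {0}. -/
open Classical

lemma nwd_mono' {X : Type*} [TopologicalSpace X] {s t : Set X} (h : t ⊆ s)
    (hs : IsNowhereDense s) : IsNowhereDense t := by
  have : interior (closure t) ⊆ interior (closure s) :=
    interior_mono (closure_mono h)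
  rw [IsNowhereDense] at hs ⊢
  exact Set.subset_eq_empty (hs ▸ this) rfl

lemma kmeager_mono {κ X : Type*} [TopologicalSpace X] {A C : Set X}
    (h : A ⊆ C) (hC : KMeager κ C) : KMeager κ A := by
  obtain ⟨F, hF, rfl⟩ := hC
  refine ⟨fun i => A ∩ F i, fun i => nwd_mono' Set.inter_subset_right (hF i), ?_⟩
  rw [← Set.inter_iUnion]
  exact (Set.inter_eq_self_of_subset_left h).symm

lemma basicOpen_inter {B : Type*} [BooleanAlgebra B] (a b : B) :
    basicOpen (a ⊓ b) = basicOpen a ∩ basicOpen b := by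
  ext G
  obtain ⟨hup, hmeet, -, -⟩ := G.2
  exact ⟨fun h => ⟨hup _ _ h inf_le_left, hup _ _ h inf_le_right⟩,
    fun ⟨h1, h2⟩ => hmeet _ _ h1 h2⟩

lemma top_mem_ultra {B : Type*} [BooleanAlgebra B] (G : StoneSp B) : (⊤ : B) ∈ G.1 := by
  obtain ⟨-, -, hbot, hall⟩ := G.2
  rcases (hall ⊤).1 with h | h
  · exact h
  · simp at h; exact absurd h hbot

lemma stone_basis {B : Type*} [BooleanAlgebra B] :
    TopologicalSpace.IsTopologicalBasis
      {S : Set (StoneSp B) | ∃ b : B, S = basicOpen b} := by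
  refine ⟨?_, ?_, rfl⟩
  · rintro t₁ ⟨a, rfl⟩ t₂ ⟨b, rfl⟩ x hx
    exact ⟨basicOpen (a ⊓ b), ⟨a ⊓ b, rfl⟩, by rwa [basicOpen_inter],
      by rw [basicOpen_inter]⟩
  · apply Set.eq_univ_of_univ_subset
    intro x _
    exact Set.mem_sUnion.2 ⟨basicOpen ⊤, ⟨⊤, rfl⟩, top_mem_ultra x⟩

/-- if `S ⊆ St(B)` has the κ-Baire property, then
`D = {b ≠ 0 : O_b \ S is κ-meager or O_b ∩ S is κ-meager}` is dense in
`B \ {0}`. -/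
theorem statement11 {κ B : Type*} [Infinite κ] [CompleteBooleanAlgebra B]
    (S : Set (StoneSp B)) (hS : KBaireProperty κ S) :
    ∀ b : B, b ≠ ⊥ → ∃ d : B, ⊥ < d ∧ d ≤ b ∧
      (KMeager κ (basicOpen d \ S) ∨ KMeager κ (basicOpen d ∩ S)) := by
  obtain ⟨U, hUopen, hM⟩ := hS
  intro b hb
  by_cases h : ∃ x ∈ basicOpen b, x ∈ U
  · obtain ⟨x, hxb, hxU⟩ := h
    obtain ⟨t, ⟨c, rfl⟩, hxc, hcU⟩ :=
      stone_basis.exists_subset_of_mem_open hxU hUopen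
    refine ⟨b ⊓ c, ?_, inf_le_left, Or.inl ?_⟩
    · rcases eq_or_ne (b ⊓ c) ⊥ with h0 | h0
      · exfalso
        have : (⊥ : B) ∈ x.1 := h0 ▸ x.2.2.1 b c hxb hxc
        exact x.2.2.2.1 this
      · exact bot_lt_iff_ne_bot.2 h0
    · refine kmeager_mono (C := symmDiff S U) ?_ hM
      intro y hy
      have hyU : y ∈ U := by
        apply hcU
        exact y.2.1 _ _ hy.1 inf_le_right
      exact Set.mem_symmDiff.2 (Or.inr ⟨hyU, hy.2⟩)
  · refine ⟨b, bot_lt_iff_ne_bot.2 hb, le_refl b, Or.inr ?_⟩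
    refine kmeager_mono (C := symmDiff S U) ?_ hM
    intro y hy
    exact Set.mem_symmDiff.2 (Or.inl ⟨hy.2, fun hyU => h ⟨y, hy.1, hyU⟩⟩)
end
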